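/- Let O be a ring admitting a constrained filtration, and let O′ be a ring containing O as a subring such that O is contained in the center of O′ and O′ is free and finitely generated as an O-module. Then O′ admits a constrained filtration. -/

import Mathlib

/-- A constrained filtration of a ring `O`: an increasing chain `(Oₙ)` of finite
nonempty subsets such that (CF0) `⋃ₙ Oₙ = O`; (CF1) there is `k` with
`Oₙ + Oₙ ⊆ O_{n+k}` for all `n`; (CF2) for every `a ∈ O` there is `k` with
`a·Oₙ ⊆ O_{n+k}` for all `n`; (CF3) for every `ε > 0` there is `C_ε > 0` with
`|O_{n+1}| ≤ C_ε·|Oₙ|^(1+ε)` for all `n`. -/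
def IsConstrainedFiltration (O : Type*) [Ring O] (F : ℕ → Set O) : Prop :=
  (∀ n, (F n).Finite ∧ (F n).Nonempty) ∧
  (∀ n, F n ⊆ F (n + 1)) ∧
  (∀ x : O, ∃ n, x ∈ F n) ∧
  (∃ k : ℕ, ∀ n, ∀ x ∈ F n, ∀ y ∈ F n, x + y ∈ F (n + k)) ∧
  (∀ a : O, ∃ k : ℕ, ∀ n, ∀ x ∈ F n, a * x ∈ F (n + k)) ∧
  (∀ ε : ℝ, 0 < ε → ∃ C : ℝ, 0 < C ∧
    ∀ n, ((F (n + 1)).ncard : ℝ) ≤ C * ((F n).ncard : ℝ) ^ ((1 : ℝ) + ε))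

/-- A ring is constrainedly filtered if it admits a constrained filtration. -/
def ConstrainedlyFiltered (O : Type*) [Ring O] : Prop :=
  ∃ F : ℕ → Set O, IsConstrainedFiltration O F

/-!
Fix a basis `b` of `O'` over `O`, indexed by a finite type of size `d`, and let the `n`-th piece
of the filtration of `O'` consist of the elements whose `b`-coordinates all lie in `Oₙ`. Addition
is coordinatewise; multiplication by a fixed `a` acts on coordinates through the fixed matrix of
left multiplication by `a`, whose finitely many entries each shift the index by a bounded amount,
and a sum of `d` terms shifts it by a bounded amount more. The `n`-th piece has `|Oₙ|^d` elements,
so (CF3) holds with the constant `C_ε^d`.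
-/

lemma Set.ncard_univ_pi_const {ι α : Type*} [Fintype ι] (s : Set α) :
    (Set.univ.pi fun _ : ι => s).ncard = s.ncard ^ Fintype.card ι := by
  rw [← Nat.card_coe_set_eq, Nat.card_congr (Equiv.Set.univPi fun _ : ι => s), Nat.card_pi,
    Finset.prod_const, Finset.card_univ, Nat.card_coe_set_eq]

lemma Real.pow_le_mul_rpow_pow {a y C ε : ℝ} (d : ℕ) (ha : 0 ≤ a) (hy : 0 ≤ y)
    (h : a ≤ C * y ^ (1 + ε)) : a ^ d ≤ C ^ d * (y ^ d) ^ (1 + ε) :=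
  calc a ^ d ≤ (C * y ^ (1 + ε)) ^ d := pow_le_pow_left₀ ha h d
    _ = C ^ d * (y ^ d) ^ (1 + ε) := by
      rw [mul_pow, ← Real.rpow_natCast (y ^ (1 + ε)), ← Real.rpow_mul hy, ← Real.rpow_natCast y,
        ← Real.rpow_mul hy, mul_comm (1 + ε)]

namespace IsConstrainedFiltration

section Ring

variable {O : Type*} [Ring O] {F : ℕ → Set O}

theorem monotone (hF : IsConstrainedFiltration O F) : Monotone F :=
  monotone_nat_of_le_succ hF.2.1

theorem exists_forall_mem (hF : IsConstrainedFiltration O F) {ι : Type*} [Finite ι]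
    (x : ι → O) : ∃ n, ∀ i, x i ∈ F n := by
  choose g hg using fun i => hF.2.2.1 (x i)
  obtain ⟨n, hn⟩ := Finite.exists_le g
  exact ⟨n, fun i => hF.monotone (hn i) (hg i)⟩

theorem sum_mem (hF : IsConstrainedFiltration O F) {k : ℕ}
    (hk : ∀ n, ∀ x ∈ F n, ∀ y ∈ F n, x + y ∈ F (n + k)) {ι : Type*} (s : Finset ι)
    {f : ι → O} {m : ℕ} (h0 : 0 ∈ F m) (hf : ∀ j ∈ s, f j ∈ F m) :
    ∑ j ∈ s, f j ∈ F (m + s.card * k) := by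
  classical
  induction s using Finset.cons_induction with
  | empty => simpa using h0
  | cons a s ha ih =>
    rw [Finset.sum_cons, Finset.card_cons, add_one_mul, ← add_assoc]
    have hfa : f a ∈ F (m + s.card * k) :=
      hF.monotone (Nat.le_add_right _ _) (hf a (Finset.mem_cons_self a s))
    exact hk _ _ hfa _ (ih fun j hj => hf j (Finset.mem_cons_of_mem hj))

theorem exists_sum_mem (hF : IsConstrainedFiltration O F) (ι : Type*) [Fintype ι] :
    ∃ k, ∀ m (f : ι → O), (∀ j, f j ∈ F m) → ∑ j, f j ∈ F (m + k) := by
  obtain ⟨ka, hka⟩ := hF.2.2.2.1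
  obtain ⟨n₀, h0⟩ := hF.2.2.1 0
  refine ⟨n₀ + Fintype.card ι * ka, fun m f hf => ?_⟩
  have hsum := hF.sum_mem hka Finset.univ (m := m + n₀)
    (hF.monotone (Nat.le_add_left _ _) h0) fun j _ => hF.monotone (Nat.le_add_right _ _) (hf j)
  rwa [Finset.card_univ, add_assoc] at hsum

theorem exists_mulVec_mem (hF : IsConstrainedFiltration O F) {κ ι : Type*} [Finite κ]
    [Fintype ι] (A : Matrix κ ι O) :
    ∃ k, ∀ m (x : ι → O), (∀ j, x j ∈ F m) → ∀ i, A.mulVec x i ∈ F (m + k) := by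
  choose kmul hkmul using hF.2.2.2.2.1
  obtain ⟨K, hK⟩ := Finite.exists_le fun p : κ × ι => kmul (A p.1 p.2)
  obtain ⟨ks, hks⟩ := hF.exists_sum_mem ι
  refine ⟨K + ks, fun m x hx i => ?_⟩
  rw [← add_assoc]
  refine hks _ _ fun j => hF.monotone ?_ (hkmul (A i j) m (x j) (hx j))
  have : kmul (A i j) ≤ K := hK (i, j)
  omega

end Ring

theorem preimage_basis_equivFun {O O' : Type*} [CommRing O] [Ring O'] [Algebra O O']
    {ι : Type*} [Fintype ι] (b : Module.Basis ι O O') {F : ℕ → Set O}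
    (hF : IsConstrainedFiltration O F) :
    IsConstrainedFiltration O' fun n => b.equivFun ⁻¹' Set.univ.pi fun _ => F n := by
  classical
  refine ⟨fun n => ⟨?_, ?_⟩, fun n => ?_, fun x => ?_, ?_, fun a => ?_, fun ε hε => ?_⟩
  · exact (Set.Finite.pi fun _ => (hF.1 n).1).preimage b.equivFun.injective.injOn
  · obtain ⟨c, hc⟩ := (hF.1 n).2
    exact ⟨b.equivFun.symm fun _ => c, by
      rw [Set.mem_preimage, LinearEquiv.apply_symm_apply]
      exact fun _ _ => hc⟩
  · exact Set.preimage_mono (Set.pi_mono fun _ _ => hF.2.1 n)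
  · obtain ⟨n, hn⟩ := hF.exists_forall_mem (b.equivFun x)
    exact ⟨n, fun i _ => hn i⟩
  · obtain ⟨k, hk⟩ := hF.2.2.2.1
    refine ⟨k, fun n x hx y hy i _ => ?_⟩
    rw [map_add]
    exact hk n _ (hx i trivial) _ (hy i trivial)
  · obtain ⟨k, hk⟩ := hF.exists_mulVec_mem (Algebra.leftMulMatrix b a)
    refine ⟨k, fun n x hx i _ => ?_⟩
    have hmul : b.equivFun (a * x) = (Algebra.leftMulMatrix b a).mulVec (b.equivFun x) :=
      (Algebra.leftMulMatrix_mulVec_repr b a x).symm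
    rw [hmul]
    exact hk n _ (fun j => hx j trivial) i
  · obtain ⟨C, hC, hgrowth⟩ := hF.2.2.2.2.2 ε hε
    refine ⟨C ^ Fintype.card ι, pow_pos hC _, fun n => ?_⟩
    simp only [Set.ncard_preimage_of_injective_subset_range b.equivFun.injective
      (by simp [b.equivFun.surjective.range_eq]), Set.ncard_univ_pi_const, Nat.cast_pow]
    exact Real.pow_le_mul_rpow_pow _ (Nat.cast_nonneg _) (Nat.cast_nonneg _) (hgrowth n)

end IsConstrainedFiltration

theorem statement11_general (O O' : Type*) [CommRing O] [Ring O'] [Algebra O O']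
    [Module.Free O O'] [Module.Finite O O']
    (h : ConstrainedlyFiltered O) :
    ConstrainedlyFiltered O' := by
  obtain ⟨F, hF⟩ := h
  exact ⟨_, hF.preimage_basis_equivFun (Module.Free.chooseBasis O O')⟩

/-- if `O` admits a constrained filtration and `O'` is a ring
containing `O` as a central subring (here: an `O`-algebra with injective structure
map, so that `O` embeds centrally) which is free and finitely generated as an
`O`-module, then `O'` admits a constrained filtration. -/
theorem statement11 (O O' : Type*) [CommRing O] [Ring O'] [Algebra O O']
    (hinj : Function.Injective (algebraMap O O'))
    [Module.Free O O'] [Module.Finite O O']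
    (h : ConstrainedlyFiltered O) :
    ConstrainedlyFiltered O' :=
  statement11_general O O' h
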